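/- arXiv:1702.01143 — 3 statements merged into one kernel-verified Lean document; each statement's English description precedes it below -/
import Mathlib

section
/- Let (X_{n,k})_{k∈ℤ, n≥1} be a triangular array of integrable real random variables that is row-wise stationary (for each n, the sequence (X_{n,k})_k is strictly stationary), with (X_{n,1})_{n≥1} uniformly integrable. Assume that for each fixed m ≥ 1, the random vector (X_{n,1},...,X_{n,m}) converges in distribution as n→∞ to (X_1,...,X_m), and that (1/m)∑_{u=1}^m X_u → c in L¹ as m→∞, for a constant c. Then (1/n)∑_{u=1}^n X_{n,u} → c in L¹ as n→∞. -/
/-!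
Fix a block length `m`. Cutting `1, …, n` into blocks of length `m`, stationarity of row `n`
bounds `E|n⁻¹ S_n - c|` by `E|m⁻¹ S_m - c|` plus a boundary term `O(m / n)`, the latter uniform
in `n` by uniform integrability. Uniform integrability also lets us replace `|m⁻¹ S_m - c|` by
its truncation at level `M + |c|`, at the cost of `E(|X_{n,1}| - M)⁺`, which is small uniformly
in `n`. The truncation is a bounded continuous function of `(X_{n,1}, …, X_{n,m})`, so its
expectation converges to the one for the limit sequence, which is at most
`E|m⁻¹ (X_1 + ⋯ + X_m) - c|`, small for `m` large.
-/

open MeasureTheory Filter Topology Finset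

lemma abs_avg_sub_le_min_add_avg_posPart {m : ℕ} (hm : m ≠ 0) (x : Fin m → ℝ) (c M : ℝ) :
    |(m : ℝ)⁻¹ * ∑ i, x i - c|
      ≤ min |(m : ℝ)⁻¹ * ∑ i, x i - c| (M + |c|) + (m : ℝ)⁻¹ * ∑ i, max (|x i| - M) 0 := by
  have hsum : |(m : ℝ)⁻¹ * ∑ i, x i| - M ≤ (m : ℝ)⁻¹ * ∑ i, max (|x i| - M) 0 :=
    calc |(m : ℝ)⁻¹ * ∑ i, x i| - M ≤ (m : ℝ)⁻¹ * ∑ i, (|x i| - M) := by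
          rw [abs_mul, abs_inv, Nat.abs_cast, sum_sub_distrib, sum_const, card_univ,
            Fintype.card_fin, nsmul_eq_mul, mul_sub, inv_mul_cancel_left₀ (by positivity)]
          gcongr
          exact abs_sum_le_sum_abs _ _
      _ ≤ (m : ℝ)⁻¹ * ∑ i, max (|x i| - M) 0 := by gcongr; exact le_max_left _ _
  have htail_nonneg : 0 ≤ (m : ℝ)⁻¹ * ∑ i, max (|x i| - M) 0 := by
    have := fun i => le_max_right (|x i| - M) 0
    positivity
  rw [← min_add_add_right]
  exact le_min (le_add_of_nonneg_right htail_nonneg)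
    (by linarith [abs_sub ((m : ℝ)⁻¹ * ∑ i, x i) c])

lemma sum_range_mul_eq_sum_blocks {β : Type*} [AddCommMonoid β] (f : ℕ → β) (m q : ℕ) :
    ∑ u ∈ range (m * q), f u = ∑ j ∈ range q, ∑ i ∈ range m, f (m * j + i) := by
  induction q with
  | zero => simp
  | succ q ih => rw [Nat.mul_succ, sum_range_add, ih, sum_range_succ]

lemma abs_sum_range_sub_le_blocks (y : ℕ → ℝ) (c : ℝ) (m q r : ℕ) :
    |∑ u ∈ range (m * q + r), y u - ((m * q + r : ℕ) : ℝ) * c|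
      ≤ ∑ j ∈ range q, |∑ i ∈ range m, y (m * j + i) - m * c|
        + (∑ i ∈ range r, |y (m * q + i)| + r * |c|) := by
  have hsplit : ∑ u ∈ range (m * q + r), y u - ((m * q + r : ℕ) : ℝ) * c
      = ∑ j ∈ range q, (∑ i ∈ range m, y (m * j + i) - m * c)
        + (∑ i ∈ range r, y (m * q + i) - r * c) := by
    rw [sum_range_add, sum_range_mul_eq_sum_blocks, sum_sub_distrib, sum_const, card_range,
      nsmul_eq_mul]
    push_cast
    ring
  rw [hsplit]
  refine (abs_add_le _ _).trans (add_le_add (abs_sum_le_sum_abs _ _) ?_)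
  refine (abs_sub _ _).trans (add_le_add (abs_sum_le_sum_abs _ _) ?_)
  rw [abs_mul, Nat.abs_cast]

section UniformIntegrability

variable {Ω : Type*} [MeasurableSpace Ω] {μ : Measure Ω}

lemma integral_posPart_abs_sub_le_setIntegral {f : Ω → ℝ} (hf : Integrable f μ) {M M' : ℝ}
    (hM : 0 ≤ M) (hM' : M' ≤ M) :
    ∫ ω, max (|f ω| - M) 0 ∂μ ≤ ∫ ω in {ω | M' < |f ω|}, |f ω| ∂μ := by
  have hs : NullMeasurableSet {ω | M' < |f ω|} μ :=
    nullMeasurableSet_lt aemeasurable_const hf.aemeasurable.abs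
  rw [← integral_indicator₀ hs]
  refine integral_mono_of_nonneg (.of_forall fun _ => le_max_right _ _) (hf.abs.indicator₀ hs)
    (.of_forall fun ω => ?_)
  simp only [Set.indicator_apply, Set.mem_ofPred_eq]
  split_ifs with h
  · exact max_le (by linarith) (abs_nonneg _)
  · exact max_le (by linarith) le_rfl

lemma exists_forall_integral_posPart_abs_sub_le {ι : Type*} {f : ι → Ω → ℝ}
    (hf : ∀ i, Integrable (f i) μ)
    (hui : ∀ ε > (0 : ℝ), ∃ M : ℝ, ∀ i, ∫ ω in {ω | M < |f i ω|}, |f i ω| ∂μ ≤ ε)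
    {δ : ℝ} (hδ : 0 < δ) :
    ∃ M, ∀ i, ∫ ω, max (|f i ω| - M) 0 ∂μ ≤ δ := by
  obtain ⟨M, hM⟩ := hui δ hδ
  exact ⟨max M 0, fun i => (integral_posPart_abs_sub_le_setIntegral (hf i) (le_max_right _ _)
    (le_max_left _ _)).trans (hM i)⟩

lemma exists_forall_integral_abs_le [IsProbabilityMeasure μ] {ι : Type*} {f : ι → Ω → ℝ}
    (hf : ∀ i, Integrable (f i) μ)
    (hui : ∀ ε > (0 : ℝ), ∃ M : ℝ, ∀ i, ∫ ω in {ω | M < |f i ω|}, |f i ω| ∂μ ≤ ε) :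
    ∃ K, ∀ i, ∫ ω, |f i ω| ∂μ ≤ K := by
  obtain ⟨M, hM⟩ := exists_forall_integral_posPart_abs_sub_le hf hui one_pos
  refine ⟨1 + M, fun i => ?_⟩
  have htail : Integrable (fun ω => max (|f i ω| - M) 0) μ :=
    ((hf i).abs.sub (integrable_const M)).sup (integrable_const 0)
  calc ∫ ω, |f i ω| ∂μ ≤ ∫ ω, (max (|f i ω| - M) 0 + M) ∂μ :=
        integral_mono (hf i).abs (htail.add (integrable_const M)) fun ω => by
          linarith [le_max_left (|f i ω| - M) 0]
    _ ≤ 1 + M := by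
        rw [integral_add htail (integrable_const M), integral_const, probReal_univ, one_smul]
        linarith [hM i]

end UniformIntegrability

noncomputable def truncatedAvgDeviation (m : ℕ) (c M : ℝ) :
    BoundedContinuousFunction (Fin m → ℝ) ℝ :=
  BoundedContinuousFunction.ofNormedAddCommGroup (fun x => min |(m : ℝ)⁻¹ * ∑ i, x i - c| M)
    (by fun_prop) |M| fun _ => abs_le.2
      ⟨le_min ((neg_nonpos.2 (abs_nonneg M)).trans (abs_nonneg _)) (neg_abs_le M),
        (min_le_right _ _).trans (le_abs_self M)⟩

lemma truncatedAvgDeviation_apply (m : ℕ) (c M : ℝ) (x : Fin m → ℝ) :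
    truncatedAvgDeviation m c M x = min |(m : ℝ)⁻¹ * ∑ i, x i - c| M :=
  rfl

lemma integral_truncatedAvgDeviation_le {Ω : Type*} [MeasurableSpace Ω] (μ : Measure Ω)
    [IsFiniteMeasure μ] (Z : ℕ → Ω → ℝ) (hZ : ∀ u, Integrable (Z u) μ) (m : ℕ) (c M : ℝ) :
    ∫ ω, truncatedAvgDeviation m c M (fun i : Fin m => Z (i + 1) ω) ∂μ
      ≤ ∫ ω, |(m : ℝ)⁻¹ * ∑ u ∈ range m, Z (u + 1) ω - c| ∂μ := by
  refine integral_mono ?_ (by fun_prop) fun ω => ?_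
  · exact (by fun_prop : Integrable (fun ω => |(m : ℝ)⁻¹ * ∑ i : Fin m, Z (i + 1) ω - c|) μ).inf
      (integrable_const M)
  · simpa only [truncatedAvgDeviation_apply, Fin.sum_univ_eq_sum_range (fun u => Z (u + 1) ω)]
      using min_le_left _ _

lemma integral_abs_inv_mul_sub_eq {Ω : Type*} [MeasurableSpace Ω] (μ : Measure Ω) (f : Ω → ℝ)
    {a : ℝ} (ha : 0 < a) (c : ℝ) :
    ∫ ω, |a⁻¹ * f ω - c| ∂μ = a⁻¹ * ∫ ω, |f ω - a * c| ∂μ := by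
  rw [← integral_const_mul]
  congr with ω
  rw [← abs_of_pos (inv_pos.2 ha), ← abs_mul, abs_of_pos (inv_pos.2 ha), mul_sub,
    inv_mul_cancel_left₀ ha.ne']

def StrictlyStationary {Ω : Type*} [MeasurableSpace Ω] (μ : Measure Ω) (Y : ℤ → Ω → ℝ) : Prop :=
  ∀ (k : ℤ) (m : ℕ), Measure.map (fun ω => fun i : Fin m => Y (k + (i : ℕ)) ω) μ
    = Measure.map (fun ω => fun i : Fin m => Y (1 + (i : ℕ)) ω) μ

namespace StrictlyStationary

variable {Ω : Type*} [MeasurableSpace Ω] {μ : Measure Ω} {Y : ℤ → Ω → ℝ}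

lemma integral_comp_eq (hY : StrictlyStationary μ Y) (hYm : ∀ k, AEMeasurable (Y k) μ) (k : ℤ)
    {m : ℕ} {g : (Fin m → ℝ) → ℝ} (hg : Measurable g) :
    ∫ ω, g (fun i : Fin m => Y (k + (i : ℕ)) ω) ∂μ
      = ∫ ω, g (fun i : Fin m => Y (1 + (i : ℕ)) ω) ∂μ := by
  rw [← integral_map (aemeasurable_pi_lambda _ fun i => hYm _) hg.aestronglyMeasurable, hY k m,
    integral_map (aemeasurable_pi_lambda _ fun i => hYm _) hg.aestronglyMeasurable]

lemma integral_comp_sum_eq (hY : StrictlyStationary μ Y) (hYm : ∀ k, AEMeasurable (Y k) μ)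
    (k : ℤ) (m : ℕ) {φ : ℝ → ℝ} (hφ : Measurable φ) :
    ∫ ω, φ (∑ i ∈ range m, Y (k + i) ω) ∂μ = ∫ ω, φ (∑ i ∈ range m, Y (1 + i) ω) ∂μ := by
  simpa only [Finset.sum_range] using
    hY.integral_comp_eq hYm k (g := fun x : Fin m → ℝ => φ (∑ i, x i)) (by fun_prop)

lemma integral_comp_apply_eq (hY : StrictlyStationary μ Y) (hYm : ∀ k, AEMeasurable (Y k) μ)
    (k : ℤ) {φ : ℝ → ℝ} (hφ : Measurable φ) :
    ∫ ω, φ (Y k ω) ∂μ = ∫ ω, φ (Y 1 ω) ∂μ := by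
  simpa using hY.integral_comp_sum_eq hYm k 1 hφ

lemma integral_abs_sum_sub_le [IsProbabilityMeasure μ] (hY : StrictlyStationary μ Y)
    (hint : ∀ k, Integrable (Y k) μ) (c : ℝ) (m q r : ℕ) :
    ∫ ω, |∑ u ∈ range (m * q + r), Y (u + 1) ω - ((m * q + r : ℕ) : ℝ) * c| ∂μ
      ≤ q * ∫ ω, |∑ i ∈ range m, Y (1 + i) ω - m * c| ∂μ + r * (∫ ω, |Y 1 ω| ∂μ + |c|) := by
  have hYm : ∀ k, AEMeasurable (Y k) μ := fun k => (hint k).aemeasurable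
  have hblock : ∀ j : ℕ, ∫ ω, |∑ i ∈ range m, Y ((m * j + i : ℕ) + 1) ω - m * c| ∂μ
      = ∫ ω, |∑ i ∈ range m, Y (1 + i) ω - m * c| ∂μ := fun j => by
    rw [← hY.integral_comp_sum_eq hYm ((m * j : ℕ) + 1) m (φ := fun t => |t - m * c|)
      (by fun_prop)]
    congr! 6 with ω i
    push_cast
    ring
  have hrem : ∀ i : ℕ, ∫ ω, |Y ((m * q + i : ℕ) + 1) ω| ∂μ = ∫ ω, |Y 1 ω| ∂μ := fun i =>
    hY.integral_comp_apply_eq hYm _ measurable_abs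
  calc ∫ ω, |∑ u ∈ range (m * q + r), Y (u + 1) ω - ((m * q + r : ℕ) : ℝ) * c| ∂μ
      ≤ ∫ ω, (∑ j ∈ range q, |∑ i ∈ range m, Y ((m * j + i : ℕ) + 1) ω - m * c|
          + (∑ i ∈ range r, |Y ((m * q + i : ℕ) + 1) ω| + r * |c|)) ∂μ :=
        integral_mono (by fun_prop) (by fun_prop) fun ω =>
          abs_sum_range_sub_le_blocks (fun u => Y (u + 1) ω) c m q r
    _ = q * ∫ ω, |∑ i ∈ range m, Y (1 + i) ω - m * c| ∂μ + r * (∫ ω, |Y 1 ω| ∂μ + |c|) := by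
      rw [integral_add (by fun_prop) (by fun_prop), integral_finsetSum _ (by fun_prop),
        integral_add (by fun_prop) (by fun_prop), integral_finsetSum _ (by fun_prop)]
      simp only [hblock, hrem, sum_const, card_range, nsmul_eq_mul, integral_const, probReal_univ,
        smul_eq_mul, one_mul]
      ring

lemma integral_abs_avg_sub_le [IsProbabilityMeasure μ] (hY : StrictlyStationary μ Y)
    (hint : ∀ k, Integrable (Y k) μ) (c : ℝ) {m n : ℕ} (hm : m ≠ 0) (hn : n ≠ 0) :
    ∫ ω, |(n : ℝ)⁻¹ * ∑ u ∈ range n, Y (u + 1) ω - c| ∂μ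
      ≤ ∫ ω, |(m : ℝ)⁻¹ * ∑ i ∈ range m, Y (1 + i) ω - c| ∂μ
        + m * (∫ ω, |Y 1 ω| ∂μ + |c|) / n := by
  obtain ⟨q, r, hrm, rfl⟩ : ∃ q r, r < m ∧ n = m * q + r :=
    ⟨n / m, n % m, Nat.mod_lt _ (Nat.pos_of_ne_zero hm), (Nat.div_add_mod n m).symm⟩
  have hblocks := hY.integral_abs_sum_sub_le hint c m q r
  have hm' : (0 : ℝ) < m := by positivity
  have hn' : (0 : ℝ) < ((m * q + r : ℕ) : ℝ) := by positivity
  rw [integral_abs_inv_mul_sub_eq μ _ hn', integral_abs_inv_mul_sub_eq μ _ hm']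
  set N : ℝ := ((m * q + r : ℕ) : ℝ) with hN
  set a := ∫ ω, |∑ i ∈ range m, Y (1 + i) ω - m * c| ∂μ
  set K := ∫ ω, |Y 1 ω| ∂μ + |c|
  have hqm : (m : ℝ) * q ≤ N := by rw [hN]; push_cast; linarith [r.cast_nonneg (α := ℝ)]
  have hr : (r : ℝ) ≤ m := by exact_mod_cast hrm.le
  have ha : 0 ≤ a := integral_nonneg fun _ => abs_nonneg _
  have hK : 0 ≤ K := add_nonneg (integral_nonneg fun _ => abs_nonneg _) (abs_nonneg c)
  calc N⁻¹ * ∫ ω, |∑ u ∈ range (m * q + r), Y (u + 1) ω - N * c| ∂μ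
      ≤ N⁻¹ * (q * a + r * K) := by gcongr
    _ = (m * q) * ((m : ℝ)⁻¹ * a) / N + r * K / N := by field_simp
    _ ≤ N * ((m : ℝ)⁻¹ * a) / N + m * K / N := by gcongr
    _ = (m : ℝ)⁻¹ * a + m * K / N := by rw [mul_div_cancel_left₀ _ hn'.ne']

lemma integral_abs_avg_sub_le_truncated [IsFiniteMeasure μ] (hY : StrictlyStationary μ Y)
    (hint : ∀ k, Integrable (Y k) μ) {m : ℕ} (hm : m ≠ 0) (c M : ℝ) :
    ∫ ω, |(m : ℝ)⁻¹ * ∑ i ∈ range m, Y (1 + i) ω - c| ∂μ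
      ≤ ∫ ω, truncatedAvgDeviation m c (M + |c|) (fun i : Fin m => Y (1 + (i : ℕ)) ω) ∂μ
        + ∫ ω, max (|Y 1 ω| - M) 0 ∂μ := by
  have htrunc : Integrable
      (fun ω => truncatedAvgDeviation m c (M + |c|) (fun i : Fin m => Y (1 + (i : ℕ)) ω)) μ :=
    (by fun_prop : Integrable (fun ω => |(m : ℝ)⁻¹ * ∑ i : Fin m, Y (1 + (i : ℕ)) ω - c|) μ).inf
      (integrable_const (M + |c|))
  have htail_int : ∀ k, Integrable (fun ω => max (|Y k ω| - M) 0) μ := fun k =>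
    ((hint k).abs.sub (integrable_const M)).sup (integrable_const 0)
  have htail : ∀ k, ∫ ω, max (|Y k ω| - M) 0 ∂μ = ∫ ω, max (|Y 1 ω| - M) 0 ∂μ := fun k =>
    hY.integral_comp_apply_eq (fun k => (hint k).aemeasurable) k
      (φ := fun t => max (|t| - M) 0) (by fun_prop)
  calc ∫ ω, |(m : ℝ)⁻¹ * ∑ i ∈ range m, Y (1 + i) ω - c| ∂μ
      ≤ ∫ ω, (truncatedAvgDeviation m c (M + |c|) (fun i : Fin m => Y (1 + (i : ℕ)) ω)
          + (m : ℝ)⁻¹ * ∑ i : Fin m, max (|Y (1 + (i : ℕ)) ω| - M) 0) ∂μ :=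
        integral_mono (by fun_prop)
          (htrunc.add ((integrable_finsetSum _ fun i _ => htail_int _).const_mul _)) fun ω => by
          simpa only [Finset.sum_range, truncatedAvgDeviation_apply] using
            abs_avg_sub_le_min_add_avg_posPart hm _ c M
    _ = ∫ ω, truncatedAvgDeviation m c (M + |c|) (fun i : Fin m => Y (1 + (i : ℕ)) ω) ∂μ
          + ∫ ω, max (|Y 1 ω| - M) 0 ∂μ := by
        rw [integral_add htrunc ((integrable_finsetSum _ fun i _ => htail_int _).const_mul _),
          integral_const_mul, integral_finsetSum _ fun i _ => htail_int _]
        simp only [htail, sum_const, card_univ, Fintype.card_fin, nsmul_eq_mul,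
          inv_mul_cancel_left₀ (Nat.cast_ne_zero.2 hm : (m : ℝ) ≠ 0)]

end StrictlyStationary

theorem triangular_array_L1_lln_general
    {Ω : Type*} [MeasurableSpace Ω] (μ : Measure Ω) [IsProbabilityMeasure μ]
    (X : ℕ → ℤ → Ω → ℝ) (Xlim : ℕ → Ω → ℝ) (c : ℝ)
    (hint : ∀ n k, Integrable (X n k) μ)
    (hintlim : ∀ u, Integrable (Xlim u) μ)
    -- row-wise strict stationarity
    (hstat : ∀ n (k : ℤ) (m : ℕ),
      Measure.map (fun ω => fun i : Fin m => X n (k + (i : ℕ)) ω) μ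
        = Measure.map (fun ω => fun i : Fin m => X n (1 + (i : ℕ)) ω) μ)
    -- uniform integrability of (X_{n,1})_n
    (hui : ∀ ε > (0 : ℝ), ∃ M : ℝ, ∀ n : ℕ,
      ∫ ω in {ω | M < |X n 1 ω|}, |X n 1 ω| ∂μ ≤ ε)
    -- convergence in distribution of (X_{n,1},...,X_{n,m}) to (X_1,...,X_m)
    (hconv : ∀ m : ℕ, ∀ f : BoundedContinuousFunction (Fin m → ℝ) ℝ,
      Tendsto (fun n : ℕ => ∫ ω, f (fun i : Fin m => X n (1 + (i : ℕ)) ω) ∂μ) atTop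
        (𝓝 (∫ ω, f (fun i : Fin m => Xlim ((i : ℕ) + 1) ω) ∂μ)))
    -- L¹ convergence of the Cesàro averages of the limit sequence to c
    (hL1 : Tendsto
      (fun m : ℕ => ∫ ω, |(m : ℝ)⁻¹ * ∑ u ∈ Finset.range m, Xlim (u + 1) ω - c| ∂μ)
      atTop (𝓝 0)) :
    Tendsto
      (fun n : ℕ => ∫ ω, |(n : ℝ)⁻¹ * ∑ u ∈ Finset.range n, X n ((u : ℤ) + 1) ω - c| ∂μ)
      atTop (𝓝 0) := by
  have hY : ∀ n, StrictlyStationary μ (X n) := hstat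
  obtain ⟨K, hK⟩ := exists_forall_integral_abs_le (f := fun n => X n 1) (fun n => hint n 1) hui
  refine NormedAddGroup.tendsto_nhds_zero.2 fun ε hε => ?_
  have hε3 : 0 < ε / 3 := by positivity
  obtain ⟨M, htail⟩ :=
    exists_forall_integral_posPart_abs_sub_le (f := fun n => X n 1) (fun n => hint n 1) hui hε3
  obtain ⟨m, hm, hm0⟩ := ((hL1.eventually (gt_mem_nhds hε3)).and (eventually_ne_atTop 0)).exists
  have hlim := (integral_truncatedAvgDeviation_le μ Xlim hintlim m c (M + |c|)).trans_lt hm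
  have hrem : ∀ᶠ n : ℕ in atTop, m * (K + |c|) / n < ε / 3 :=
    (tendsto_const_nhds.div_atTop tendsto_natCast_atTop_atTop).eventually (gt_mem_nhds hε3)
  filter_upwards [(hconv m _).eventually (gt_mem_nhds hlim), hrem, eventually_ne_atTop 0]
    with n hn_trunc hn_rem hn
  rw [Real.norm_of_nonneg (integral_nonneg fun _ => abs_nonneg _)]
  calc _ ≤ ∫ ω, |(m : ℝ)⁻¹ * ∑ i ∈ range m, X n (1 + i) ω - c| ∂μ
          + m * (∫ ω, |X n 1 ω| ∂μ + |c|) / n :=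
        (hY n).integral_abs_avg_sub_le (hint n) c hm0 hn
    _ ≤ (∫ ω, truncatedAvgDeviation m c (M + |c|) (fun i : Fin m => X n (1 + (i : ℕ)) ω) ∂μ
          + ∫ ω, max (|X n 1 ω| - M) 0 ∂μ) + m * (K + |c|) / n := by
        gcongr
        · exact (hY n).integral_abs_avg_sub_le_truncated (hint n) hm0 c M
        · exact hK n
    _ < ε := by linarith [htail n]

/-- Lemma (triangular-array L¹ law of large numbers, Peligrad–Zhang Lemma 1):
for a row-wise strictly stationary, uniformly integrable triangular array whose
finite-dimensional distributions converge to those of a limiting sequence whose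
Cesàro averages converge to `c` in `L¹`, the row averages converge to `c` in `L¹`. -/
theorem triangular_array_L1_lln
    {Ω : Type*} [MeasurableSpace Ω] (μ : Measure Ω) [IsProbabilityMeasure μ]
    (X : ℕ → ℤ → Ω → ℝ) (Xlim : ℕ → Ω → ℝ) (c : ℝ)
    (hmeas : ∀ n k, Measurable (X n k))
    (hmeaslim : ∀ u, Measurable (Xlim u))
    (hint : ∀ n k, Integrable (X n k) μ)
    (hintlim : ∀ u, Integrable (Xlim u) μ)
    -- row-wise strict stationarity
    (hstat : ∀ n (k : ℤ) (m : ℕ),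
      Measure.map (fun ω => fun i : Fin m => X n (k + (i : ℕ)) ω) μ
        = Measure.map (fun ω => fun i : Fin m => X n (1 + (i : ℕ)) ω) μ)
    -- uniform integrability of (X_{n,1})_n
    (hui : ∀ ε > (0 : ℝ), ∃ M : ℝ, ∀ n : ℕ,
      ∫ ω in {ω | M < |X n 1 ω|}, |X n 1 ω| ∂μ ≤ ε)
    -- convergence in distribution of (X_{n,1},...,X_{n,m}) to (X_1,...,X_m)
    (hconv : ∀ m : ℕ, ∀ f : BoundedContinuousFunction (Fin m → ℝ) ℝ,
      Tendsto (fun n : ℕ => ∫ ω, f (fun i : Fin m => X n (1 + (i : ℕ)) ω) ∂μ) atTop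
        (𝓝 (∫ ω, f (fun i : Fin m => Xlim ((i : ℕ) + 1) ω) ∂μ)))
    -- L¹ convergence of the Cesàro averages of the limit sequence to c
    (hL1 : Tendsto
      (fun m : ℕ => ∫ ω, |(m : ℝ)⁻¹ * ∑ u ∈ Finset.range m, Xlim (u + 1) ω - c| ∂μ)
      atTop (𝓝 0)) :
    Tendsto
      (fun n : ℕ => ∫ ω, |(n : ℝ)⁻¹ * ∑ u ∈ Finset.range n, X n ((u : ℤ) + 1) ω - c| ∂μ)
      atTop (𝓝 0) :=
  triangular_array_L1_lln_general μ X Xlim c hint hintlim hstat hui hconv hL1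
end

section
/- Let X, Y, Z be integrable real random variables such that (X,Y) is independent of Z, and let g be measurable with g(Z,Y) integrable. Then E(g(Z,Y) | σ(X,Y)) = E(g(Z,Y) | σ(Y)) almost surely. -/
/-!
By independence the law of `((X, Y), Z)` is the product of the laws of `(X, Y)` and `Z`, so
Fubini shows that `E(g(Z, Y) | σ(X, Y)) = h(Y)` with `h y = ∫ g(z, y) dP_Z(z)`. This version is
already `σ(Y)`-measurable, so the tower property makes it `E(g(Z, Y) | σ(Y))` as well.
-/

open MeasureTheory ProbabilityTheory

section IndepFun

variable {Ω α β E : Type*} {m0 : MeasurableSpace Ω} {mα : MeasurableSpace α}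
  {mβ : MeasurableSpace β} [NormedAddCommGroup E]
  {μ : Measure Ω} [IsFiniteMeasure μ] {W : Ω → α} {Z : Ω → β} {F : α × β → E}

lemma integrable_comp_prodMk_iff_of_indepFun (hW : Measurable W) (hZ : Measurable Z)
    (hF : StronglyMeasurable F) (hindep : IndepFun W Z μ) :
    Integrable (fun ω => F (W ω, Z ω)) μ ↔ Integrable F ((μ.map W).prod (μ.map Z)) := by
  rw [← (indepFun_iff_map_prod_eq_prod_map_map hW.aemeasurable hZ.aemeasurable).mp hindep,
    integrable_map_measure hF.aestronglyMeasurable (hW.prodMk hZ).aemeasurable]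
  rfl

variable [NormedSpace ℝ E]

lemma setIntegral_preimage_comp_prodMk_of_indepFun (hW : Measurable W) (hZ : Measurable Z)
    (hF : StronglyMeasurable F) (hindep : IndepFun W Z μ)
    (hFint : Integrable (fun ω => F (W ω, Z ω)) μ) {A : Set α} (hA : MeasurableSet A) :
    ∫ ω in W ⁻¹' A, F (W ω, Z ω) ∂μ = ∫ ω in W ⁻¹' A, ∫ z, F (W ω, z) ∂(μ.map Z) ∂μ := by
  have hmap := (indepFun_iff_map_prod_eq_prod_map_map hW.aemeasurable hZ.aemeasurable).mp hindep
  have hprod := (integrable_comp_prodMk_iff_of_indepFun hW hZ hF hindep).mp hFint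
  calc ∫ ω in W ⁻¹' A, F (W ω, Z ω) ∂μ
      = ∫ p in A ×ˢ Set.univ, F p ∂(μ.map fun ω => (W ω, Z ω)) := by
        rw [setIntegral_map (hA.prod .univ) hF.aestronglyMeasurable (hW.prodMk hZ).aemeasurable,
          Set.mk_preimage_prod, Set.preimage_univ, Set.inter_univ]
    _ = ∫ w in A, ∫ z, F (w, z) ∂(μ.map Z) ∂(μ.map W) := by
        rw [hmap, setIntegral_prod _ hprod.integrableOn, Measure.restrict_univ]
    _ = ∫ ω in W ⁻¹' A, ∫ z, F (W ω, z) ∂(μ.map Z) ∂μ :=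
        setIntegral_map hA hF.integral_prod_right'.aestronglyMeasurable hW.aemeasurable

variable [CompleteSpace E] in
lemma condExp_comp_prodMk_of_indepFun (hW : Measurable W) (hZ : Measurable Z)
    (hF : StronglyMeasurable F) (hindep : IndepFun W Z μ)
    (hFint : Integrable (fun ω => F (W ω, Z ω)) μ) :
    μ[fun ω => F (W ω, Z ω) | mα.comap W] =ᵐ[μ] fun ω => ∫ z, F (W ω, z) ∂(μ.map Z) := by
  have hint : Integrable (fun ω => ∫ z, F (W ω, z) ∂(μ.map Z)) μ := by
    have := ((integrable_comp_prodMk_iff_of_indepFun hW hZ hF hindep).mp hFint).integral_prod_left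
    exact (integrable_map_measure hF.integral_prod_right'.aestronglyMeasurable
      hW.aemeasurable).mp this
  refine (ae_eq_condExp_of_forall_setIntegral_eq hW.comap_le hFint
    (fun _ _ _ => hint.integrableOn) ?_ ?_).symm
  · rintro _ ⟨A, hA, rfl⟩ _
    exact (setIntegral_preimage_comp_prodMk_of_indepFun hW hZ hF hindep hFint hA).symm
  · exact (hF.integral_prod_right'.comp_measurable (comap_measurable W)).aestronglyMeasurable

end IndepFun

lemma condExp_ae_eq_condExp_of_le_of_aestronglyMeasurable {Ω E : Type*}
    [NormedAddCommGroup E] [NormedSpace ℝ E] [CompleteSpace E]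
    {m₁ m₂ m0 : MeasurableSpace Ω} {μ : Measure Ω} {f : Ω → E}
    (h₁₂ : m₁ ≤ m₂) (h₂ : m₂ ≤ m0) [SigmaFinite (μ.trim h₂)]
    [SigmaFinite (μ.trim (h₁₂.trans h₂))] (hf : AEStronglyMeasurable[m₁] (μ[f | m₂]) μ) :
    μ[f | m₂] =ᵐ[μ] μ[f | m₁] :=
  (condExp_of_aestronglyMeasurable' (h₁₂.trans h₂) hf integrable_condExp).symm.trans
    (condExp_condExp_of_le h₁₂ h₂)

theorem condexp_pair_indep_other_general
    {Ω : Type*} {m0 : MeasurableSpace Ω} (μ : Measure Ω) [IsProbabilityMeasure μ]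
    (X Y Z : Ω → ℝ) (g : ℝ × ℝ → ℝ)
    (hX : Measurable X) (hY : Measurable Y) (hZ : Measurable Z)
    (hg : Measurable g)
    (hindep : IndepFun (fun ω => (X ω, Y ω)) Z μ)
    (hgint : Integrable (fun ω => g (Z ω, Y ω)) μ) :
    μ[(fun ω => g (Z ω, Y ω)) |
        MeasurableSpace.comap (fun ω => (X ω, Y ω)) inferInstance]
      =ᵐ[μ] μ[(fun ω => g (Z ω, Y ω)) | MeasurableSpace.comap Y inferInstance] := by
  have hXY : Measurable fun ω => (X ω, Y ω) := hX.prodMk hY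
  have hσ : MeasurableSpace.comap Y inferInstance ≤
      MeasurableSpace.comap (fun ω => (X ω, Y ω)) inferInstance :=
    (comap_measurable (fun ω => (X ω, Y ω))).snd.comap_le
  have hcond := condExp_comp_prodMk_of_indepFun (F := fun p => g (p.2, p.1.2)) hXY hZ
    (hg.comp (measurable_snd.prodMk measurable_fst.snd)).stronglyMeasurable hindep hgint
  refine condExp_ae_eq_condExp_of_le_of_aestronglyMeasurable hσ hXY.comap_le ?_
  exact AEStronglyMeasurable.congr (hg.stronglyMeasurable.integral_prod_left'.comp_measurable
    (comap_measurable Y)).aestronglyMeasurable hcond.symm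

/-- If `(X,Y)` is independent of `Z` and `g(Z,Y)` is integrable, then
`E(g(Z,Y) | σ(X,Y)) = E(g(Z,Y) | σ(Y))` almost surely. -/
theorem condexp_pair_indep_other
    {Ω : Type*} {m0 : MeasurableSpace Ω} (μ : Measure Ω) [IsProbabilityMeasure μ]
    (X Y Z : Ω → ℝ) (g : ℝ × ℝ → ℝ)
    (hX : Measurable X) (hY : Measurable Y) (hZ : Measurable Z)
    (hg : Measurable g)
    (hXint : Integrable X μ) (hYint : Integrable Y μ) (hZint : Integrable Z μ)
    (hindep : IndepFun (fun ω => (X ω, Y ω)) Z μ)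
    (hgint : Integrable (fun ω => g (Z ω, Y ω)) μ) :
    μ[(fun ω => g (Z ω, Y ω)) |
        MeasurableSpace.comap (fun ω => (X ω, Y ω)) inferInstance]
      =ᵐ[μ] μ[(fun ω => g (Z ω, Y ω)) | MeasurableSpace.comap Y inferInstance] :=
  condexp_pair_indep_other_general (m0 := m0) μ X Y Z g hX hY hZ hg hindep hgint
end

section
/- Let (ξ_{n,m})_{n,m∈ℤ} be a random field such that the columns η_m = (ξ_{n,m})_{n∈ℤ} are independent, and let F_{n,m} = σ(ξ_{i,j} : i ≤ n, j ≤ m). Then for any integrable random variable X and any indices, E(E(X | F_{a,b}) | F_{u,v}) = E(X | F_{min(a,u), min(b,v)}) almost surely; i.e., the filtration (F_{n,m}) is commuting. -/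
/-!
Split the field along a column `b`: the columns `j ≤ b` and `j > b` are independent. Let `b ≤ v`.
If `a ≤ u`, then `F_{a,b} ⊆ F_{u,v}` and there is nothing to prove. If `u ≤ a`, then
`F_{u,b} ⊆ F_{u,v} ⊆ F_{u,b} ∨ σ(columns > b)`, and the columns `> b` are independent of
`F_{a,b} ⊇ F_{u,b}`. For an `F_{a,b}`-measurable `Y`, the functions `E(Y | F_{u,b})` and `Y` then
have the same integral `P(D) ∫_A Y` over every rectangle `A ∩ D` with `A ∈ F_{u,b}` and `D` in the
columns `> b`, so `E(Y | F_{u,v}) = E(Y | F_{u,b})`; for `Y = E(X | F_{a,b})` this is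
`E(X | F_{u,b})`. The case `v < b` follows by taking adjoints.
-/

open MeasureTheory ProbabilityTheory
open Set MeasurableSpace

section SigmaAlgebra

variable {Ω : Type*}

lemma isPiSystem_image2_inter (m₁ m₂ : MeasurableSpace Ω) :
    IsPiSystem (image2 (· ∩ ·) {s | MeasurableSet[m₁] s} {t | MeasurableSet[m₂] t}) := by
  rintro _ ⟨s, hs, t, ht, rfl⟩ _ ⟨s', hs', t', ht', rfl⟩ -
  exact ⟨s ∩ s', hs.inter hs', t ∩ t', ht.inter ht', (inter_inter_inter_comm s t s' t').symm⟩

lemma generateFrom_image2_inter (m₁ m₂ : MeasurableSpace Ω) :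
    generateFrom (image2 (· ∩ ·) {s | MeasurableSet[m₁] s} {t | MeasurableSet[m₂] t}) =
      m₁ ⊔ m₂ := by
  refine le_antisymm (generateFrom_le ?_) (sup_le (fun s hs => ?_) fun t ht => ?_)
  · rintro _ ⟨s, hs, t, ht, rfl⟩
    exact (le_sup_left (b := m₂) s hs).inter (le_sup_right (a := m₁) t ht)
  · exact measurableSet_generateFrom ⟨s, hs, univ, .univ, inter_univ s⟩
  · exact measurableSet_generateFrom ⟨univ, .univ, t, ht, univ_inter t⟩

end SigmaAlgebra

section SetIntegral

variable {Ω E : Type*} [NormedAddCommGroup E] [NormedSpace ℝ E] {m m0 : MeasurableSpace Ω}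
  {μ : Measure Ω}

lemma setIntegral_eq_of_isPiSystem {s : Set (Set Ω)} (hm : m ≤ m0) (h_eq : m = generateFrom s)
    (h_pi : IsPiSystem s) {f g : Ω → E} (hf : Integrable f μ) (hg : Integrable g μ)
    (h_univ : ∫ ω, f ω ∂μ = ∫ ω, g ω ∂μ) (h_basic : ∀ t ∈ s, ∫ ω in t, f ω ∂μ = ∫ ω in t, g ω ∂μ)
    {t : Set Ω} (ht : MeasurableSet[m] t) : ∫ ω in t, f ω ∂μ = ∫ ω in t, g ω ∂μ := by
  induction t, ht using induction_on_inter h_eq h_pi with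
  | empty => simp
  | basic t ht => exact h_basic t ht
  | compl t ht h => rw [setIntegral_compl (hm t ht) hf, setIntegral_compl (hm t ht) hg, h_univ, h]
  | iUnion t hdisj ht h =>
    rw [integral_iUnion (fun n => hm _ (ht n)) hdisj hf.integrableOn,
      integral_iUnion (fun n => hm _ (ht n)) hdisj hg.integrableOn]
    exact tsum_congr h

lemma setIntegral_eq_measureReal_smul_integral_of_indep [IsFiniteMeasure μ] [CompleteSpace E]
    {m₁ m₂ : MeasurableSpace Ω} (h₁ : m₁ ≤ m0) (h₂ : m₂ ≤ m0) (hind : Indep m₁ m₂ μ) {f : Ω → E}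
    (hf : StronglyMeasurable[m₁] f) (hfi : Integrable f μ) {t : Set Ω} (ht : MeasurableSet[m₂] t) :
    ∫ ω in t, f ω ∂μ = μ.real t • ∫ ω, f ω ∂μ := by
  calc ∫ ω in t, f ω ∂μ = ∫ ω in t, (μ[f|m₂]) ω ∂μ := (setIntegral_condExp h₂ hfi ht).symm
    _ = ∫ _ in t, ∫ ω, f ω ∂μ ∂μ :=
      setIntegral_congr_ae (h₂ t ht) ((condExp_indep_eq h₁ h₂ hf hind).mono fun _ h _ => h)
    _ = μ.real t • ∫ ω, f ω ∂μ := setIntegral_const _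

end SetIntegral

section CondExp

variable {Ω : Type*} {m m0 : MeasurableSpace Ω} {μ : Measure Ω}

lemma integral_condExp_mul_eq_integral_mul_condExp (hm : m ≤ m0) [SigmaFinite (μ.trim hm)]
    {f g : Ω → ℝ} (hf : Integrable f μ) (hg : Integrable g μ)
    (hfg : Integrable (μ[f|m] * g) μ) (hgf : Integrable (f * μ[g|m]) μ) :
    ∫ ω, (μ[f|m] * g) ω ∂μ = ∫ ω, (f * μ[g|m]) ω ∂μ := by
  calc ∫ ω, (μ[f|m] * g) ω ∂μ = ∫ ω, (μ[μ[f|m] * g|m]) ω ∂μ := (integral_condExp hm).symm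
    _ = ∫ ω, (μ[f|m] * μ[g|m]) ω ∂μ :=
      integral_congr_ae (condExp_mul_of_stronglyMeasurable_left stronglyMeasurable_condExp hfg hg)
    _ = ∫ ω, (μ[f * μ[g|m]|m]) ω ∂μ :=
      (integral_congr_ae
        (condExp_mul_of_stronglyMeasurable_right stronglyMeasurable_condExp hgf hf)).symm
    _ = ∫ ω, (f * μ[g|m]) ω ∂μ := integral_condExp hm

lemma setIntegral_condExp_eq_integral_condExp_indicator_mul [IsFiniteMeasure μ] (hm : m ≤ m0)
    {X : Ω → ℝ} (hX : Integrable X μ) {s : Set Ω} (hs : MeasurableSet s) :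
    ∫ ω in s, (μ[X|m]) ω ∂μ = ∫ ω, (μ[s.indicator (1 : Ω → ℝ)|m] * X) ω ∂μ := by
  have hs1 : Integrable (s.indicator (1 : Ω → ℝ)) μ := (integrable_const 1).indicator hs
  have hbdd : ∀ᵐ ω ∂μ, ‖(μ[s.indicator (1 : Ω → ℝ)|m]) ω‖ ≤ 1 :=
    ae_bdd_abs_condExp_of_ae_bdd_abs (.of_forall fun ω => by
      simpa using norm_indicator_le_norm_self (1 : Ω → ℝ) ω)
  have hs1_mul : s.indicator (1 : Ω → ℝ) * μ[X|m] = s.indicator (μ[X|m]) := by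
    ext ω; by_cases hω : ω ∈ s <;> simp [hω]
  rw [integral_condExp_mul_eq_integral_mul_condExp hm hs1 hX
    (hX.bdd_mul (stronglyMeasurable_condExp.mono hm).aestronglyMeasurable hbdd)
    (by rw [hs1_mul]; exact integrable_condExp.indicator hs), hs1_mul, integral_indicator hs]

variable [IsFiniteMeasure μ]

lemma condExp_sup_eq_condExp_of_indep {𝒜 ℬ 𝒟 : MeasurableSpace Ω} (hℬ : ℬ ≤ m0) (h𝒟 : 𝒟 ≤ m0)
    (h𝒜ℬ : 𝒜 ≤ ℬ) (hind : Indep ℬ 𝒟 μ) {Y : Ω → ℝ} (hYm : StronglyMeasurable[ℬ] Y)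
    (hY : Integrable Y μ) : μ[Y|𝒜 ⊔ 𝒟] =ᵐ[μ] μ[Y|𝒜] := by
  have h𝒜 : 𝒜 ≤ m0 := h𝒜ℬ.trans hℬ
  have hrect : ∀ {h : Ω → ℝ}, StronglyMeasurable[ℬ] h → Integrable h μ →
      ∀ {A D : Set Ω}, MeasurableSet[𝒜] A → MeasurableSet[𝒟] D →
        ∫ ω in A ∩ D, h ω ∂μ = μ.real D • ∫ ω in A, h ω ∂μ := by
    intro h hhm hh A D hA hD
    rw [inter_comm, ← setIntegral_indicator (h𝒜 A hA),
      setIntegral_eq_measureReal_smul_integral_of_indep hℬ h𝒟 hind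
        (hhm.indicator (h𝒜ℬ A hA)) (hh.indicator (h𝒜 A hA)) hD,
      integral_indicator (h𝒜 A hA)]
  refine (ae_eq_condExp_of_forall_setIntegral_eq (sup_le h𝒜 h𝒟) hY
    (fun _ _ _ => integrable_condExp.integrableOn) (fun t ht _ => ?_)
    (stronglyMeasurable_condExp.mono le_sup_left).aestronglyMeasurable).symm
  refine setIntegral_eq_of_isPiSystem (sup_le h𝒜 h𝒟) (generateFrom_image2_inter 𝒜 𝒟).symm
    (isPiSystem_image2_inter 𝒜 𝒟) integrable_condExp hY (integral_condExp h𝒜) ?_ ht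
  rintro _ ⟨A, hA, D, hD, rfl⟩
  rw [hrect (stronglyMeasurable_condExp.mono h𝒜ℬ) integrable_condExp hA hD, hrect hYm hY hA hD,
    setIntegral_condExp h𝒜 hY hA]

lemma condExp_condExp_eq_of_indep {𝒜 ℬ 𝒢 𝒟 : MeasurableSpace Ω} (hℬ : ℬ ≤ m0) (h𝒟 : 𝒟 ≤ m0)
    (h𝒜ℬ : 𝒜 ≤ ℬ) (h𝒜𝒢 : 𝒜 ≤ 𝒢) (h𝒢 : 𝒢 ≤ 𝒜 ⊔ 𝒟) (hind : Indep ℬ 𝒟 μ) (X : Ω → ℝ) :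
    μ[μ[X|ℬ]|𝒢] =ᵐ[μ] μ[X|𝒜] := by
  have h𝒜𝒟 : 𝒜 ⊔ 𝒟 ≤ m0 := sup_le (h𝒜ℬ.trans hℬ) h𝒟
  calc μ[μ[X|ℬ]|𝒢] =ᵐ[μ] μ[μ[μ[X|ℬ]|𝒜 ⊔ 𝒟]|𝒢] := (condExp_condExp_of_le h𝒢 h𝒜𝒟).symm
    _ =ᵐ[μ] μ[μ[μ[X|ℬ]|𝒜]|𝒢] := condExp_congr_ae
      (condExp_sup_eq_condExp_of_indep hℬ h𝒟 h𝒜ℬ hind stronglyMeasurable_condExp integrable_condExp)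
    _ = μ[μ[X|ℬ]|𝒜] := condExp_of_stronglyMeasurable (h𝒢.trans h𝒜𝒟)
      (stronglyMeasurable_condExp.mono h𝒜𝒢) integrable_condExp
    _ =ᵐ[μ] μ[X|𝒜] := condExp_condExp_of_le h𝒜ℬ hℬ

/-- `E[E[· | N] | M]` is the adjoint of `E[E[· | M] | N]` (tested against indicators of sets in
`M`), and `E[· | K]` is self-adjoint. -/
lemma condExp_condExp_eq_of_condExp_condExp_eq {M N K : MeasurableSpace Ω} (hM : M ≤ m0)
    (hN : N ≤ m0) (hKM : K ≤ M)
    (h : ∀ X : Ω → ℝ, Integrable X μ → μ[μ[X|M]|N] =ᵐ[μ] μ[X|K]) {X : Ω → ℝ}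
    (hX : Integrable X μ) : μ[μ[X|N]|M] =ᵐ[μ] μ[X|K] := by
  refine (ae_eq_condExp_of_forall_setIntegral_eq hM integrable_condExp
    (fun _ _ _ => integrable_condExp.integrableOn) (fun s hs _ => ?_)
    (stronglyMeasurable_condExp.mono hKM).aestronglyMeasurable).symm
  have hs1 : Integrable (s.indicator (1 : Ω → ℝ)) μ := (integrable_const 1).indicator (hM s hs)
  have hNK : μ[s.indicator (1 : Ω → ℝ)|N] =ᵐ[μ] μ[s.indicator 1|K] := by
    simpa only [condExp_of_stronglyMeasurable hM (stronglyMeasurable_one.indicator hs) hs1]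
      using h _ hs1
  calc ∫ ω in s, (μ[X|K]) ω ∂μ = ∫ ω, (μ[s.indicator (1 : Ω → ℝ)|K] * X) ω ∂μ :=
        setIntegral_condExp_eq_integral_condExp_indicator_mul (hKM.trans hM) hX (hM s hs)
    _ = ∫ ω, (μ[s.indicator (1 : Ω → ℝ)|N] * X) ω ∂μ :=
        integral_congr_ae (hNK.symm.mul (ae_eq_refl X))
    _ = ∫ ω in s, (μ[X|N]) ω ∂μ :=
        (setIntegral_condExp_eq_integral_condExp_indicator_mul hN hX (hM s hs)).symm

end CondExp

section RandomField

variable {Ω β : Type*} [MeasurableSpace β] (ξ : ℤ → ℤ → Ω → β)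

abbrev quadrantSigma (n m : ℤ) : MeasurableSpace Ω :=
  ⨆ (i : ℤ) (_ : i ≤ n) (j : ℤ) (_ : j ≤ m), MeasurableSpace.comap (ξ i j) inferInstance

abbrev columnsSigma (S : Set ℤ) : MeasurableSpace Ω :=
  ⨆ j ∈ S, MeasurableSpace.comap (fun ω n => ξ n j ω) inferInstance

variable {ξ}

lemma comap_le_columnsSigma {i j : ℤ} {S : Set ℤ} (hj : j ∈ S) :
    MeasurableSpace.comap (ξ i j) inferInstance ≤ columnsSigma ξ S := by
  have hcomp : ξ i j = (fun x : ℤ → β => x i) ∘ fun ω n => ξ n j ω := rfl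
  rw [hcomp, ← comap_comp]
  exact (comap_mono (measurable_pi_apply i).comap_le).trans
    (le_biSup (fun j => MeasurableSpace.comap (fun ω n => ξ n j ω) inferInstance) hj)

lemma quadrantSigma_mono {n n' m m' : ℤ} (hn : n ≤ n') (hm : m ≤ m') :
    quadrantSigma ξ n m ≤ quadrantSigma ξ n' m' :=
  iSup₂_le fun i hi => iSup₂_le fun j hj =>
    le_iSup₂_of_le (f := fun i (_ : i ≤ n') => _) i (hi.trans hn) <|
      le_iSup₂_of_le (f := fun j (_ : j ≤ m') => _) j (hj.trans hm) le_rfl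

lemma quadrantSigma_le_columnsSigma (n m : ℤ) : quadrantSigma ξ n m ≤ columnsSigma ξ (Iic m) :=
  iSup₂_le fun _ _ => iSup₂_le fun _ hj => comap_le_columnsSigma hj

lemma quadrantSigma_le_sup_columnsSigma (n m b : ℤ) :
    quadrantSigma ξ n m ≤ quadrantSigma ξ n b ⊔ columnsSigma ξ (Ioi b) := by
  refine iSup₂_le fun i hi => iSup₂_le fun j _ => ?_
  rcases le_or_gt j b with hjb | hbj
  · exact le_sup_of_le_left <| le_iSup₂_of_le (f := fun i (_ : i ≤ n) => _) i hi <|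
      le_iSup₂_of_le (f := fun j (_ : j ≤ b) => _) j hjb le_rfl
  · exact le_sup_of_le_right (comap_le_columnsSigma hbj)

variable {m0 : MeasurableSpace Ω} {μ : Measure Ω}

lemma columnsSigma_le (hξ : ∀ n m, Measurable (ξ n m)) (S : Set ℤ) : columnsSigma ξ S ≤ m0 :=
  iSup₂_le fun j _ => (measurable_pi_lambda _ fun n => hξ n j).comap_le

lemma quadrantSigma_le (hξ : ∀ n m, Measurable (ξ n m)) (n m : ℤ) : quadrantSigma ξ n m ≤ m0 :=
  (quadrantSigma_le_columnsSigma n m).trans (columnsSigma_le hξ _)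

lemma indep_columnsSigma_Iic_Ioi (hξ : ∀ n m, Measurable (ξ n m))
    (hindep : iIndepFun (fun m ω n => ξ n m ω) μ) (b : ℤ) :
    Indep (columnsSigma ξ (Iic b)) (columnsSigma ξ (Ioi b)) μ :=
  indep_iSup_of_disjoint (fun j => (measurable_pi_lambda _ fun n => hξ n j).comap_le)
    ((iIndepFun_iff_iIndep _ _ _).mp hindep) (Iic_disjoint_Ioi le_rfl)

lemma condExp_condExp_quadrantSigma_of_le [IsFiniteMeasure μ] (hξ : ∀ n m, Measurable (ξ n m))
    (hindep : iIndepFun (fun m ω n => ξ n m ω) μ) {a b u v : ℤ} (hbv : b ≤ v) (X : Ω → ℝ) :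
    μ[μ[X|quadrantSigma ξ a b]|quadrantSigma ξ u v] =ᵐ[μ] μ[X|quadrantSigma ξ (min a u) b] := by
  rcases le_total a u with hau | hua
  · rw [min_eq_left hau, condExp_of_stronglyMeasurable (quadrantSigma_le hξ u v)
      (stronglyMeasurable_condExp.mono (quadrantSigma_mono hau hbv)) integrable_condExp]
  · rw [min_eq_right hua]
    exact condExp_condExp_eq_of_indep (quadrantSigma_le hξ a b) (columnsSigma_le hξ _)
      (quadrantSigma_mono hua le_rfl) (quadrantSigma_mono le_rfl hbv)
      (quadrantSigma_le_sup_columnsSigma u v b)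
      (indep_of_indep_of_le_left (indep_columnsSigma_Iic_Ioi hξ hindep b)
        (quadrantSigma_le_columnsSigma a b)) X

end RandomField

/-- If the columns `η_m = (ξ_{n,m})_{n∈ℤ}` of a random field `(ξ_{n,m})` are
independent, then the filtration `F_{n,m} = σ(ξ_{i,j} : i ≤ n, j ≤ m)` is
commuting: `E(E(X|F_{a,b})|F_{u,v}) = E(X|F_{a∧u, b∧v})` a.s. -/
theorem commuting_filtration_of_indep_columns
    {Ω : Type*} {m0 : MeasurableSpace Ω} (μ : Measure Ω) [IsProbabilityMeasure μ]
    (ξ : ℤ → ℤ → Ω → ℝ)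
    (hmeas : ∀ n m, Measurable (ξ n m))
    -- the columns (ξ_{·,m}) are (jointly) independent
    (hindep : iIndepFun
      (fun m : ℤ => fun ω => fun n : ℤ => ξ n m ω) μ)
    -- F n m = σ(ξ_{i,j} : i ≤ n, j ≤ m)
    (F : ℤ → ℤ → MeasurableSpace Ω)
    (hF : ∀ n m, F n m =
      ⨆ (i : ℤ) (_ : i ≤ n) (j : ℤ) (_ : j ≤ m),
        MeasurableSpace.comap (ξ i j) inferInstance) :
    ∀ (X : Ω → ℝ), Integrable X μ →
      ∀ a b u v : ℤ,
        μ[(μ[X | F a b]) | F u v] =ᵐ[μ] μ[X | F (min a u) (min b v)] := by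
  obtain rfl : F = quadrantSigma ξ := funext fun n => funext fun m => hF n m
  intro X hX a b u v
  rcases le_total b v with hbv | hvb
  · rw [min_eq_left hbv]
    exact condExp_condExp_quadrantSigma_of_le hmeas hindep hbv X
  · rw [min_comm a u, min_eq_right hvb]
    exact condExp_condExp_eq_of_condExp_condExp_eq (quadrantSigma_le hmeas u v)
      (quadrantSigma_le hmeas a b) (quadrantSigma_mono (min_le_left u a) le_rfl)
      (fun Y _ => condExp_condExp_quadrantSigma_of_le hmeas hindep hvb Y) hX
end
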